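/- Let k be a field, R a k-algebra, G a group acting on R by k-algebra automorphisms, and suppose R is G-simple (no nonzero proper G-invariant two-sided ideals). Let A₂ be another k-algebra with a group H₂ acting by automorphisms. If u ∈ R ⊗_k A₂ is fixed by the subgroup G × {1}, commutes with all elements of R ⊗ 1, and Z(R)^G = k, then u ∈ 1 ⊗ A₂; i.e., u = 1 ⊗ w for some w ∈ A₂. -/

import Mathlib

/-!
Expand `u = ∑ᵢ vᵢ ⊗ bᵢ` along a `k`-basis `b` of `A₂`. Multiplication by `r ⊗ 1` on either side
and the action of `G × {1}` only touch the left tensor factor, so they act on the coordinates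
`vᵢ` one at a time. Hence each `vᵢ` is a `G`-fixed central element of `R`, i.e. a scalar `cᵢ`,
and `u = 1 ⊗ ∑ᵢ cᵢ bᵢ`.
-/

open TensorProduct

namespace TensorProduct

variable {k M M' N κ : Type*} [CommSemiring k] [AddCommMonoid M] [Module k M]
  [AddCommMonoid M'] [Module k M'] [AddCommMonoid N] [Module k N] [DecidableEq κ]
  (𝒞 : Module.Basis κ k N)

theorem equivFinsuppOfBasisRight_rTensor_apply (f : M →ₗ[k] M') (x : M ⊗[k] N) (i : κ) :
    equivFinsuppOfBasisRight 𝒞 (f.rTensor N x) i = f (equivFinsuppOfBasisRight 𝒞 x i) := by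
  induction x with
  | zero => simp
  | tmul m n => simp
  | add x y hx hy => simp [hx, hy]

theorem exists_eq_one_tmul_of_equivFinsuppOfBasisRight_mem_range {A : Type*} [Semiring A]
    [Algebra k A] (x : A ⊗[k] N)
    (hx : ∀ i, equivFinsuppOfBasisRight 𝒞 x i ∈ Set.range (algebraMap k A)) :
    ∃ n : N, x = 1 ⊗ₜ[k] n := by
  choose c hc using hx
  refine ⟨∑ i ∈ (equivFinsuppOfBasisRight 𝒞 x).support, c i • 𝒞 i, ?_⟩
  conv_lhs => rw [← (equivFinsuppOfBasisRight 𝒞).symm_apply_apply x]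
  simp only [equivFinsuppOfBasisRight_symm_apply, Finsupp.sum, tmul_sum, ← hc,
    Algebra.algebraMap_eq_smul_one, smul_tmul]

end TensorProduct

namespace Algebra.TensorProduct

variable {k A B : Type*} [CommSemiring k] [Semiring A] [Algebra k A] [Semiring B] [Algebra k B]

theorem tmul_one_mul_eq_rTensor (a : A) (x : A ⊗[k] B) :
    (a ⊗ₜ[k] (1 : B)) * x = (LinearMap.mulLeft k a).rTensor B x := by
  rw [← LinearMap.mulLeft_apply (R := k), LinearMap.mulLeft_tmul, LinearMap.mulLeft_one]
  rfl

theorem mul_tmul_one_eq_rTensor (a : A) (x : A ⊗[k] B) :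
    x * (a ⊗ₜ[k] (1 : B)) = (LinearMap.mulRight k a).rTensor B x := by
  rw [← LinearMap.mulRight_apply (R := k), LinearMap.mulRight_tmul, LinearMap.mulRight_one]
  rfl

end Algebra.TensorProduct

open Algebra.TensorProduct in
theorem fixed_centralizing_element_of_tensor_general
    {k : Type*} [Field k] {R A₂ : Type*} [Ring R] [Ring A₂] [Algebra k R] [Algebra k A₂]
    {G : Type*} [Group G]
    (φ : G →* (R ≃ₐ[k] R))
    (hcenter : ∀ z ∈ Subalgebra.center k R, (∀ g : G, φ g z = z) →
      ∃ c : k, z = algebraMap k R c)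
    (u : R ⊗[k] A₂)
    (hufix : ∀ g : G, (Algebra.TensorProduct.congr (φ g) (AlgEquiv.refl (R := k) (A₁ := A₂))) u = u)
    (hucomm : ∀ r : R, u * (r ⊗ₜ[k] (1 : A₂)) = (r ⊗ₜ[k] (1 : A₂)) * u) :
    ∃ w : A₂, u = (1 : R) ⊗ₜ[k] w := by
  classical
  set b := Module.Basis.ofVectorSpace k A₂
  refine exists_eq_one_tmul_of_equivFinsuppOfBasisRight_mem_range b u fun i ↦ ?_
  set z := equivFinsuppOfBasisRight (M := R) b u i
  have hz_central : z ∈ Subalgebra.center k R := by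
    refine Subalgebra.mem_center_iff.mpr fun r ↦ ?_
    simpa [mul_tmul_one_eq_rTensor, tmul_one_mul_eq_rTensor,
      equivFinsuppOfBasisRight_rTensor_apply] using
      congr(equivFinsuppOfBasisRight b $(hucomm r) i).symm
  have hz_fixed (g : G) : φ g z = z :=
    calc φ g z = equivFinsuppOfBasisRight b ((φ g).toLinearMap.rTensor A₂ u) i :=
          (equivFinsuppOfBasisRight_rTensor_apply b (φ g).toLinearMap u i).symm
      _ = z := congr(equivFinsuppOfBasisRight b $(hufix g) i)
  obtain ⟨c, hc⟩ := hcenter z hz_central hz_fixed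
  exact ⟨c, hc.symm⟩

/-- Let `R` be a `G`-simple `k`-algebra with `Z(R)^G = k`, and let `A₂` be
another `k`-algebra with a group `H₂` acting by automorphisms.  If `u ∈ R ⊗[k] A₂` is fixed by
`G × {1}` and commutes with `R ⊗ 1`, then `u = 1 ⊗ w` for some `w ∈ A₂`. -/
theorem fixed_centralizing_element_of_tensor
    {k : Type*} [Field k] {R A₂ : Type*} [Ring R] [Ring A₂] [Algebra k R] [Algebra k A₂]
    {G H₂ : Type*} [Group G] [Group H₂]
    (φ : G →* (R ≃ₐ[k] R)) (ψ : H₂ →* (A₂ ≃ₐ[k] A₂))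
    (hGsimple : ∀ I : TwoSidedIdeal R, (∀ g : G, ∀ x ∈ I, φ g x ∈ I) → I = ⊥ ∨ I = ⊤)
    (hcenter : ∀ z ∈ Subalgebra.center k R, (∀ g : G, φ g z = z) →
      ∃ c : k, z = algebraMap k R c)
    (u : R ⊗[k] A₂)
    (hufix : ∀ g : G, (Algebra.TensorProduct.congr (φ g) (AlgEquiv.refl (R := k) (A₁ := A₂))) u = u)
    (hucomm : ∀ r : R, u * (r ⊗ₜ[k] (1 : A₂)) = (r ⊗ₜ[k] (1 : A₂)) * u) :
    ∃ w : A₂, u = (1 : R) ⊗ₜ[k] w :=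
  fixed_centralizing_element_of_tensor_general φ hcenter u hufix hucomm
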